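/- arXiv:2602.02992 — 5 statements merged into one kernel-verified Lean document; each statement's English description precedes it below -/
import Mathlib

section
/- Let L ∈ ℕ with L ≥ 1. For i = 0, …, L and t ∈ ℝ, define γ_i(t) ∈ ℝ^L componentwise by (γ_i(t))_ℓ = ((ℓ−1)! / (i+ℓ−1)!) · t^{i+ℓ−1} for ℓ = 1, …, L, and define the matrix Γ(t) ∈ ℝ^{L×L} whose i-th row is γ_i(t)^⊤ for i = 1, …, L. Then Γ(t) is invertible for every t > 0. -/
open Matrix

/-- The polynomial vector `γ_i(t) ∈ ℝ^L`: its `ℓ`-th component (`ℓ` 0-based, so the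
paper's index is `ℓ+1`) is `(ℓ! / (i+ℓ)!) · t^{i+ℓ}`. -/
noncomputable def gammaVec (L i : ℕ) (t : ℝ) : Fin L → ℝ :=
  fun ℓ => ((ℓ : ℕ).factorial : ℝ) / ((i + (ℓ : ℕ)).factorial : ℝ) * t ^ (i + (ℓ : ℕ))

/-- `Γ(t) = [γ_1(t) ⋯ γ_L(t)]ᵀ ∈ ℝ^{L×L}`: the `i`-th row (0-based) is `γ_{i+1}(t)ᵀ`. -/
noncomputable def GammaMat (L : ℕ) (t : ℝ) : Matrix (Fin L) (Fin L) ℝ :=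
  Matrix.of fun i ℓ => gammaVec L ((i : ℕ) + 1) t ℓ

/-!
If `vᵀ Γ(t) = 0`, consider `P(x) = ∑ᵢ vᵢ x^{i+L} / (i+L)!` (`i = 0, …, L-1`). The `ℓ`-th
entry of `vᵀ Γ(t)` is `ℓ!` times the `(L-1-ℓ)`-th derivative of `P` at `t`, so `t ≠ 0` is a
root of `P` of multiplicity at least `L`; `0` is one too, since `x^L ∣ P`. As `deg P < 2L`,
this forces `P = 0`, i.e. `v = 0`.
-/

open Polynomial

namespace Polynomial

theorem X_sub_C_pow_dvd_of_isRoot_iterate_derivative {K : Type*} [Field K] [CharZero K]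
    {p : K[X]} {t : K} {k : ℕ} (hroot : ∀ m ≤ k, (derivative^[m] p).IsRoot t) :
    (X - C t) ^ (k + 1) ∣ p := by
  rcases eq_or_ne p 0 with rfl | hp
  · exact dvd_zero _
  · exact (pow_dvd_pow _ (lt_rootMultiplicity_of_isRoot_iterate_derivative hp hroot)).trans
      (p.pow_rootMultiplicity_dvd t)

theorem eq_zero_of_X_pow_dvd_of_X_sub_C_pow_dvd {K : Type*} [Field K] {p : K[X]} {t : K}
    {a b : ℕ} (ht : t ≠ 0) (ha : X ^ a ∣ p) (hb : (X - C t) ^ b ∣ p)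
    (hdeg : p.natDegree < a + b) : p = 0 := by
  by_contra hp
  have hcop : IsCoprime ((X : K[X]) ^ a) ((X - C t) ^ b) := by
    have : IsCoprime (X - C (0 : K)) (X - C t) :=
      isCoprime_X_sub_C_of_isUnit_sub (by simpa using ht)
    simpa using this.pow
  have hdvd := natDegree_le_of_dvd (hcop.mul_dvd ha hb) hp
  rw [natDegree_mul (pow_ne_zero _ X_ne_zero) (pow_ne_zero _ (X_sub_C_ne_zero t)),
    natDegree_X_pow, natDegree_pow, natDegree_X_sub_C, mul_one] at hdvd
  omega

end Polynomial

section GammaPoly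

variable {K : Type*} [Field K] {L : ℕ}

/-- The polynomial `P` above is `gammaPoly v (L-1)`. -/
noncomputable def gammaPoly (v : Fin L → K) (k : ℕ) : K[X] :=
  ∑ i : Fin L, C (v i / ((i + 1 + k).factorial : K)) * X ^ (i + 1 + k)

theorem derivative_gammaPoly_succ [CharZero K] (v : Fin L → K) (k : ℕ) :
    derivative (gammaPoly v (k + 1)) = gammaPoly v k := by
  rw [gammaPoly, derivative_sum]
  refine Finset.sum_congr rfl fun i _ => ?_
  rw [derivative_C_mul_X_pow, show (i : ℕ) + 1 + (k + 1) = (i + 1 + k) + 1 by omega,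
    Nat.add_sub_cancel, Nat.factorial_succ, Nat.cast_mul, Nat.cast_succ]
  have hfac : ((i + 1 + k).factorial : K) ≠ 0 := Nat.cast_ne_zero.mpr (Nat.factorial_ne_zero _)
  have hsucc : ((i + 1 + k : ℕ) : K) + 1 ≠ 0 := Nat.cast_add_one_ne_zero _
  congr 1
  field_simp

theorem iterate_derivative_gammaPoly [CharZero K] (v : Fin L → K) (m k : ℕ) :
    derivative^[m] (gammaPoly v (k + m)) = gammaPoly v k := by
  induction m with
  | zero => rfl
  | succ m ih =>
    rw [← add_assoc, Function.iterate_succ_apply, derivative_gammaPoly_succ, ih]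

theorem coeff_gammaPoly (v : Fin L → K) (k : ℕ) (j : Fin L) :
    (gammaPoly v k).coeff (j + 1 + k) = v j / ((j + 1 + k).factorial : K) := by
  simp only [gammaPoly, finsetSum_coeff, coeff_C_mul, coeff_X_pow, add_left_inj, Fin.val_inj,
    mul_ite, mul_one, mul_zero, Finset.sum_ite_eq, Finset.mem_univ, if_true]

theorem gammaPoly_eq_zero_iff [CharZero K] {v : Fin L → K} {k : ℕ} :
    gammaPoly v k = 0 ↔ v = 0 := by
  refine ⟨fun h => funext fun j => ?_, fun h => by simp [gammaPoly, h]⟩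
  have hj := coeff_gammaPoly v k j
  rw [h, coeff_zero, eq_comm, div_eq_zero_iff] at hj
  exact hj.resolve_right (Nat.cast_ne_zero.mpr (Nat.factorial_ne_zero _))

theorem X_pow_dvd_gammaPoly (v : Fin L → K) (k : ℕ) : X ^ (k + 1) ∣ gammaPoly v k :=
  Finset.dvd_sum fun i _ => (pow_dvd_pow X (by omega)).mul_left _

theorem natDegree_gammaPoly_le (v : Fin L → K) (k : ℕ) : (gammaPoly v k).natDegree ≤ L + k :=
  natDegree_sum_le_of_forall_le _ _ fun i _ =>
    (natDegree_C_mul_X_pow_le _ _).trans (by omega)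

end GammaPoly

theorem vecMul_GammaMat_apply (L : ℕ) (t : ℝ) (v : Fin L → ℝ) (ℓ : Fin L) :
    (v ᵥ* GammaMat L t) ℓ = (ℓ : ℕ).factorial * (gammaPoly v ℓ).eval t := by
  simp only [vecMul, dotProduct, GammaMat, gammaVec, of_apply, gammaPoly, eval_finsetSum,
    eval_mul, eval_C, eval_pow, eval_X, Finset.mul_sum]
  exact Finset.sum_congr rfl fun i _ => by ring

/-- **Lemma 3.2.** `Γ(t)` is invertible for every `t > 0`. -/
theorem stmt_2 (L : ℕ) (hL : 1 ≤ L) (t : ℝ) (ht : 0 < t) :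
    IsUnit (GammaMat L t) := by
  rw [isUnit_iff_isUnit_det, isUnit_iff_ne_zero]
  intro hdet
  obtain ⟨v, hv0, hv⟩ := exists_vecMul_eq_zero_iff.mpr hdet
  obtain ⟨k, rfl⟩ : ∃ k, L = k + 1 := ⟨L - 1, by omega⟩
  have heval (ℓ : ℕ) (hℓ : ℓ ≤ k) : (gammaPoly v ℓ).IsRoot t := by
    have h := congrFun hv ⟨ℓ, by omega⟩
    rw [vecMul_GammaMat_apply, Pi.zero_apply] at h
    exact (mul_eq_zero.mp h).resolve_left (by positivity)
  have hroot : ∀ m ≤ k, (derivative^[m] (gammaPoly v k)).IsRoot t := fun m hm => by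
    obtain ⟨j, rfl⟩ := Nat.exists_eq_add_of_le' hm
    rw [iterate_derivative_gammaPoly]
    exact heval j (Nat.le_add_right j m)
  refine hv0 (gammaPoly_eq_zero_iff (k := k) |>.mp ?_)
  exact eq_zero_of_X_pow_dvd_of_X_sub_C_pow_dvd ht.ne' (X_pow_dvd_gammaPoly v k)
    (X_sub_C_pow_dvd_of_isRoot_iterate_derivative hroot)
    ((natDegree_gammaPoly_le v k).trans_lt (by omega))
end

section
/- Let τ > 0, L ∈ ℕ with L ≥ 1, n ≥ 1, ℓ ∈ {0,…,L}, and f ∈ L²([0,τ];ℝ^n). Define f̃_j : [0,τ] → ℝ^n for j = −L, …, L by f̃_L(t) := (−1)^L f(t) and f̃_j(t) := ((−1)^L / (L−j−1)!) ∫_0^t (t−s)^{L−j−1} f(s) ds for j = −L, …, L−1. Define Λ_ℓ := Γ(τ)^{−1} [ f̃_{ℓ−1}(τ) f̃_{ℓ−2}(τ) ⋯ f̃_{ℓ−L}(τ) ]^⊤ ∈ ℝ^{L×n}. For b ∈ ℝ^n define ψ_b : [0,τ] → ℝ by ψ_b(t) := f̃_{ℓ−L}(t)^⊤ b − γ_L(t)^⊤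 Λ_ℓ b. Then: (a) for every j = 0, …, L−1 and every t ∈ [0,τ], the j-th derivative of ψ_b satisfies ψ_b^{(j)}(t) = f̃_{j+ℓ−L}(t)^⊤ b − γ_{L−j}(t)^⊤ Λ_ℓ b; (b) ψ_b^{(j)}(0) = 0 and ψ_b^{(j)}(τ) = 0 for every j = 0, …, L−1; (c) ψ_b^{(L−1)} is absolutely continuous and its a.e. derivative satisfies ψ_b^{(L)}(t) = f̃_{ℓ}(t)^⊤ b − γ_0(t)^⊤ Λ_ℓ b for almost every t ∈ [0,τ]; in particular ψ_b ∈ H^L_0[0,τ]. -/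
open MeasureTheory Matrix

/-- `D` is a chain of a.e. derivatives on `[0,τ]` up to order `L`: for each `ℓ < L`,
`D (ℓ+1)` is integrable on `[0,τ]` and `D ℓ` is its antiderivative there, i.e. `D ℓ` is
absolutely continuous on `[0,τ]` with a.e. derivative `D (ℓ+1)`. -/
def DerivChain (τ : ℝ) (L : ℕ) {E : Type} [NormedAddCommGroup E] [NormedSpace ℝ E]
    (D : ℕ → ℝ → E) : Prop :=
  ∀ ℓ < L, IntervalIntegrable (D (ℓ + 1)) MeasureTheory.volume 0 τ ∧
    ∀ t ∈ Set.Icc (0 : ℝ) τ, D ℓ t = D ℓ 0 + ∫ s in (0 : ℝ)..t, D (ℓ + 1) s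

/-- `f ∈ L²([0,τ]; E)`. -/
def MemL2 (τ : ℝ) {E : Type} [NormedAddCommGroup E] (f : ℝ → E) : Prop :=
  MeasureTheory.MemLp f 2 (MeasureTheory.volume.restrict (Set.Ioc (0 : ℝ) τ))

/-- `D` represents an element of `H^L_0[0,τ]` together with its derivatives: the chain
condition, `D L ∈ L²(0,τ)`, and `D ℓ` vanishes at `0` and at `τ` for all `ℓ < L`.
The element of `H^L_0[0,τ]` itself is `D 0`. -/
def IsH0 (τ : ℝ) (L : ℕ) (D : ℕ → ℝ → ℝ) : Prop :=
  DerivChain τ L D ∧ MemL2 τ (D L) ∧ ∀ ℓ < L, D ℓ 0 = 0 ∧ D ℓ τ = 0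

/-- `D` represents an element of the Sobolev space `H^M([0,τ]; E)` together with its
derivatives: the chain condition and `D M ∈ L²`. The element itself is `D 0`. -/
def IsHSob (τ : ℝ) (M : ℕ) {E : Type} [NormedAddCommGroup E] [NormedSpace ℝ E]
    (D : ℕ → ℝ → E) : Prop :=
  DerivChain τ M D ∧ MemL2 τ (D M)

/-- `f̃_j : [0,τ] → ℝⁿ` for `j : ℤ`, `j ≤ L`: `f̃_L(t) = (-1)^L f(t)` and, for `j < L`,
`f̃_j(t) = ((-1)^L / (L-j-1)!) ∫_0^t (t-s)^{L-j-1} f(s) ds`. -/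
noncomputable def fTilde (L : ℕ) {n : ℕ} (f : ℝ → Fin n → ℝ) (j : ℤ) (t : ℝ) : Fin n → ℝ :=
  if j = (L : ℤ) then (-1 : ℝ) ^ L • f t
  else ((-1 : ℝ) ^ L / ((((L : ℤ) - 1 - j).toNat.factorial : ℕ) : ℝ)) •
    ∫ s in (0 : ℝ)..t, ((t - s) ^ ((L : ℤ) - 1 - j).toNat) • f s

/-- `Λ_ℓ = Γ(τ)⁻¹ [f̃_{ℓ-1}(τ)  f̃_{ℓ-2}(τ)  ⋯  f̃_{ℓ-L}(τ)]ᵀ ∈ ℝ^{L×n}`. -/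
noncomputable def LambdaMat (τ : ℝ) (L : ℕ) {n : ℕ} (f : ℝ → Fin n → ℝ) (ℓ : ℕ) :
    Matrix (Fin L) (Fin n) ℝ :=
  (GammaMat L τ)⁻¹ * Matrix.of (fun (i : Fin L) (c : Fin n) => fTilde L f ((ℓ : ℤ) - ((i : ℕ) + 1)) τ c)


/-!
Up to the sign `(-1)^L`, the `f̃_j` with `j < L` are Cauchy's iterated primitives
`t ↦ ∫₀ᵗ (t-s)^K / K! • f s ds` of `f`, and the `γ_i` are the iterated primitives of the
monomials. Fubini on the triangle `0 < u ≤ s ≤ t` shows that each iterated primitive is the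
primitive of the previous one; this gives the derivative chain and the vanishing at `0`.
The vanishing at `τ` is the defining relation `Γ(τ) Λ_ℓ = [f̃_{ℓ-1}(τ) ⋯ f̃_{ℓ-L}(τ)]ᵀ`, once
`Γ(τ)` is known to be invertible: `(Γ(τ) v)_i = (1/i!) ∫₀^τ (τ-s)^i p(s) ds` for the polynomial
`p = ∑ v_ℓ X^ℓ` of degree `< L`, and since `p(s)` is a combination of the `(τ-s)^i`, `i < L`,
`Γ(τ) v = 0` forces `∫₀^τ p² = 0`, hence `p = 0`.
-/

open Set
open scoped Nat

section IteratedPrimitive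

variable {E : Type*} [NormedAddCommGroup E] [NormedSpace ℝ E]

/-- `iteratedPrimitive f K` is the `(K+1)`-fold primitive of `f` vanishing at `0`
(Cauchy's formula for repeated integration). -/
noncomputable def iteratedPrimitive (f : ℝ → E) (K : ℕ) (t : ℝ) : E :=
  ∫ s in (0 : ℝ)..t, ((t - s) ^ K / K !) • f s

theorem iteratedPrimitive_zero (f : ℝ → E) (t : ℝ) :
    iteratedPrimitive f 0 t = ∫ s in (0 : ℝ)..t, f s := by
  simp [iteratedPrimitive]

theorem iteratedPrimitive_apply_zero (f : ℝ → E) (K : ℕ) : iteratedPrimitive f K 0 = 0 := by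
  simp [iteratedPrimitive]

theorem integral_sub_pow_div_factorial (K : ℕ) (u t : ℝ) :
    ∫ s in u..t, (s - u) ^ K / K ! = (t - u) ^ (K + 1) / (K + 1)! := by
  rw [intervalIntegral.integral_comp_sub_right (fun x => x ^ K / K !), sub_self,
    intervalIntegral.integral_div, integral_pow, zero_pow K.succ_ne_zero, sub_zero,
    Nat.factorial_succ]
  push_cast
  field_simp

theorem iteratedPrimitive_succ [CompleteSpace E] {f : ℝ → E} {t : ℝ} (ht : 0 ≤ t)
    (hf : IntegrableOn f (Ioc 0 t)) (K : ℕ) :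
    iteratedPrimitive f (K + 1) t = ∫ s in (0 : ℝ)..t, iteratedPrimitive f K s := by
  -- Fubini on the triangle `0 < u ≤ s ≤ t`, encoded by the kernel `k`.
  set μ := volume.restrict (Ioc (0 : ℝ) t)
  let k : ℝ → ℝ → ℝ := fun s u => if u ≤ s then (s - u) ^ K / K ! else 0
  have hk_bound : ∀ s ∈ Ioc (0 : ℝ) t, ∀ u ∈ Ioc (0 : ℝ) t, ‖k s u‖ ≤ t ^ K / K ! := by
    intro s hs u hu
    simp only [k]
    split_ifs with hus
    · rw [Real.norm_of_nonneg (by have := sub_nonneg.2 hus; positivity)]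
      gcongr
      linarith [hs.2, hu.1]
    · simp only [norm_zero]; positivity
  have hF : Integrable (Function.uncurry fun s u => k s u • f u) (μ.prod μ) := by
    refine ((hf.norm.comp_snd μ).const_mul (t ^ K / K !)).mono' ?_ ?_
    · have hk : Measurable (Function.uncurry k) :=
        Measurable.ite (measurableSet_le measurable_snd measurable_fst) (by fun_prop)
          measurable_const
      exact hk.aestronglyMeasurable.smul (hf.aestronglyMeasurable.comp_snd)
    · rw [Measure.prod_restrict]
      filter_upwards [ae_restrict_mem (measurableSet_Ioc.prod measurableSet_Ioc)] with p hp
      rw [Function.uncurry_apply_pair, norm_smul]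
      exact mul_le_mul_of_nonneg_right (hk_bound _ hp.1 _ hp.2) (norm_nonneg _)
  have h_inner_u : ∀ s ∈ Ioc 0 t, iteratedPrimitive f K s = ∫ u, k s u • f u ∂μ := by
    intro s hs
    have hIoc : Ioc 0 t ∩ Iic s = Ioc 0 s := by rw [Ioc_inter_Iic, min_eq_right hs.2]
    rw [iteratedPrimitive, intervalIntegral.integral_of_le hs.1.le, ← hIoc,
      ← setIntegral_indicator measurableSet_Iic]
    simp only [μ, k, ite_smul, zero_smul, indicator_apply, mem_Iic]
  have h_inner_s : ∀ u ∈ Ioc 0 t, ∫ s, k s u ∂μ = (t - u) ^ (K + 1) / (K + 1)! := by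
    intro u hu
    have hIcc : Ioc 0 t ∩ Ici u = Icc u t := by
      ext s; simp only [mem_inter_iff, mem_Ioc, mem_Ici, mem_Icc]
      exact ⟨fun h => ⟨h.2, h.1.2⟩, fun h => ⟨⟨hu.1.trans_le h.1, h.2⟩, h.1⟩⟩
    calc ∫ s, k s u ∂μ = ∫ s in Ioc 0 t ∩ Ici u, (s - u) ^ K / K ! := by
          rw [← setIntegral_indicator measurableSet_Ici]
          simp only [μ, k, indicator_apply, mem_Ici]
      _ = ∫ s in u..t, (s - u) ^ K / K ! := by
          rw [hIcc, integral_Icc_eq_integral_Ioc, intervalIntegral.integral_of_le hu.2]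
      _ = _ := integral_sub_pow_div_factorial K u t
  calc iteratedPrimitive f (K + 1) t = ∫ u, (∫ s, k s u ∂μ) • f u ∂μ := by
        rw [iteratedPrimitive, intervalIntegral.integral_of_le ht]
        exact setIntegral_congr_fun measurableSet_Ioc fun u hu => by rw [h_inner_s u hu]
    _ = ∫ u, ∫ s, k s u • f u ∂μ ∂μ := by simp_rw [integral_smul_const]
    _ = ∫ s, ∫ u, k s u • f u ∂μ ∂μ := (integral_integral_swap hF).symm
    _ = _ := by
        rw [intervalIntegral.integral_of_le ht]
        exact setIntegral_congr_fun measurableSet_Ioc fun s hs => (h_inner_u s hs).symm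

theorem continuousOn_iteratedPrimitive [CompleteSpace E] {f : ℝ → E} {τ : ℝ} (hτ : 0 ≤ τ)
    (hf : IntegrableOn f (Ioc 0 τ)) (K : ℕ) : ContinuousOn (iteratedPrimitive f K) (Icc 0 τ) := by
  have hIcc : uIcc 0 τ = Icc 0 τ := uIcc_of_le hτ
  induction K with
  | zero =>
    have := intervalIntegral.continuousOn_primitive_interval (a := 0) (b := τ) (μ := volume)
      (f := f) (by rwa [hIcc, integrableOn_Icc_iff_integrableOn_Ioc])
    rw [hIcc] at this
    exact this.congr fun t _ => iteratedPrimitive_zero f t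
  | succ K ih =>
    have := intervalIntegral.continuousOn_primitive_interval (a := 0) (b := τ) (μ := volume)
      (f := iteratedPrimitive f K) (by rw [hIcc]; exact ih.integrableOn_Icc)
    rw [hIcc] at this
    exact this.congr fun t ht =>
      iteratedPrimitive_succ ht.1 (hf.mono_set (Ioc_subset_Ioc_right ht.2)) K

end IteratedPrimitive

theorem ContinuousOn.memLp_restrict_Ioc {E : Type*} [NormedAddCommGroup E] {g : ℝ → E}
    {a b : ℝ} (hg : ContinuousOn g (Icc a b)) (p : ENNReal) :
    MemLp g p (volume.restrict (Ioc a b)) := by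
  obtain ⟨C, hC⟩ := isCompact_Icc.exists_bound_of_continuousOn hg
  refine .of_bound ((hg.mono Ioc_subset_Icc_self).aestronglyMeasurable measurableSet_Ioc) C ?_
  filter_upwards [ae_restrict_mem measurableSet_Ioc] with x hx
  exact hC x (Ioc_subset_Icc_self hx)

theorem MemL2.intervalIntegrable {E : Type} [NormedAddCommGroup E] {τ : ℝ} {g : ℝ → E}
    (hg : MemL2 τ g) (hτ : 0 ≤ τ) : IntervalIntegrable g volume 0 τ :=
  (intervalIntegrable_iff_integrableOn_Ioc_of_le hτ).2 (hg.integrable one_le_two)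

section DerivChain

variable {τ : ℝ} {L : ℕ} {E F : Type} [NormedAddCommGroup E] [NormedSpace ℝ E]
  [NormedAddCommGroup F] [NormedSpace ℝ F]

theorem DerivChain.map [CompleteSpace E] [CompleteSpace F] {D : ℕ → ℝ → E}
    (hD : DerivChain τ L D) (T : E →L[ℝ] F) :
    DerivChain τ L (fun j t => T (D j t)) := fun j hj =>
  ⟨⟨T.integrable_comp (hD j hj).1.1, T.integrable_comp (hD j hj).1.2⟩, fun t ht => by
    dsimp only
    rw [(hD j hj).2 t ht, map_add, T.intervalIntegral_comp_comm
      ((hD j hj).1.mono_set (uIcc_subset_uIcc_left (Icc_subset_uIcc ht)))]⟩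

theorem DerivChain.sub {D₁ D₂ : ℕ → ℝ → E} (h₁ : DerivChain τ L D₁) (h₂ : DerivChain τ L D₂) :
    DerivChain τ L (fun j t => D₁ j t - D₂ j t) := fun j hj =>
  ⟨(h₁ j hj).1.sub (h₂ j hj).1, fun t ht => by
    have hsub : uIcc 0 t ⊆ uIcc 0 τ := uIcc_subset_uIcc_left (Icc_subset_uIcc ht)
    dsimp only
    rw [(h₁ j hj).2 t ht, (h₂ j hj).2 t ht, intervalIntegral.integral_sub
      ((h₁ j hj).1.mono_set hsub) ((h₂ j hj).1.mono_set hsub)]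
    abel⟩

end DerivChain

section fTilde

variable {L n : ℕ} {f : ℝ → Fin n → ℝ}

theorem fTilde_self (f : ℝ → Fin n → ℝ) (t : ℝ) : fTilde L f L t = (-1 : ℝ) ^ L • f t := by
  simp [fTilde]

theorem fTilde_eq_iteratedPrimitive (f : ℝ → Fin n → ℝ) {m : ℤ} (hm : m < L) (t : ℝ) :
    fTilde L f m t = (-1 : ℝ) ^ L • iteratedPrimitive f (L - 1 - m).toNat t := by
  rw [fTilde, if_neg hm.ne, iteratedPrimitive, div_eq_mul_inv, mul_smul,
    ← intervalIntegral.integral_smul]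
  simp_rw [smul_smul, div_eq_inv_mul]

theorem fTilde_apply_zero (f : ℝ → Fin n → ℝ) {m : ℤ} (hm : m < L) : fTilde L f m 0 = 0 := by
  rw [fTilde_eq_iteratedPrimitive f hm, iteratedPrimitive_apply_zero, smul_zero]

theorem fTilde_eq_integral {τ t : ℝ} (hf : IntegrableOn f (Ioc 0 τ)) {m : ℤ} (hm : m < L)
    (ht : t ∈ Icc 0 τ) : fTilde L f m t = ∫ s in (0 : ℝ)..t, fTilde L f (m + 1) s := by
  rw [fTilde_eq_iteratedPrimitive f hm]
  rcases (Int.add_one_le_of_lt hm).eq_or_lt with hL | hL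
  · rw [show (L - 1 - m : ℤ).toNat = 0 by omega, iteratedPrimitive_zero, hL]
    simp_rw [fTilde_self, intervalIntegral.integral_smul]
  · rw [show (L - 1 - m : ℤ).toNat = (L - 1 - (m + 1) : ℤ).toNat + 1 by omega,
      iteratedPrimitive_succ ht.1 (hf.mono_set (Ioc_subset_Ioc_right ht.2)),
      ← intervalIntegral.integral_smul]
    simp_rw [fTilde_eq_iteratedPrimitive f hL]

theorem memL2_fTilde {τ : ℝ} (hτ : 0 ≤ τ) (hf : MemL2 τ f) {m : ℤ} (hm : m ≤ L) :
    MemL2 τ (fTilde L f m) := by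
  rcases hm.eq_or_lt with rfl | hm
  · rw [show fTilde L f L = fun t => (-1 : ℝ) ^ L • f t from funext (fTilde_self f)]
    exact hf.const_smul ((-1 : ℝ) ^ L)
  · rw [show fTilde L f m = fun t => (-1 : ℝ) ^ L • iteratedPrimitive f (L - 1 - m).toNat t
      from funext (fTilde_eq_iteratedPrimitive f hm)]
    exact ((continuousOn_iteratedPrimitive hτ (hf.integrable one_le_two) _).const_smul
      ((-1 : ℝ) ^ L)).memLp_restrict_Ioc 2

theorem derivChain_fTilde {τ : ℝ} (hτ : 0 ≤ τ) (hf : MemL2 τ f) {ℓ : ℕ} (hℓ : ℓ ≤ L) :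
    DerivChain τ L (fun j t => fTilde L f ((j : ℤ) + ℓ - L) t) := by
  intro j hj
  have hshift : ((j + 1 : ℕ) : ℤ) + ℓ - L = (j + ℓ - L) + 1 := by push_cast; ring
  refine ⟨(memL2_fTilde hτ hf (by omega)).intervalIntegrable hτ, fun t ht => ?_⟩
  dsimp only
  rw [fTilde_apply_zero f (by omega), zero_add, hshift,
    fTilde_eq_integral (hf.integrable one_le_two) (by omega) ht]

end fTilde

section Gamma

open Polynomial

@[fun_prop]
theorem continuous_gammaVec (L i : ℕ) : Continuous (gammaVec L i) :=
  continuous_pi fun c => by unfold gammaVec; fun_prop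

theorem gammaVec_apply_zero (L : ℕ) {i : ℕ} (hi : i ≠ 0) : gammaVec L i 0 = 0 := by
  ext c
  simp [gammaVec, hi]

theorem integral_gammaVec (L i : ℕ) (t : ℝ) :
    ∫ s in (0 : ℝ)..t, gammaVec L i s = gammaVec L (i + 1) t := by
  ext c
  rw [← ContinuousLinearMap.proj_apply (R := ℝ) c (∫ s in (0 : ℝ)..t, gammaVec L i s),
    ← ContinuousLinearMap.intervalIntegral_comp_comm _
      ((continuous_gammaVec L i).intervalIntegrable _ _)]
  simp only [ContinuousLinearMap.proj_apply, gammaVec]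
  rw [intervalIntegral.integral_const_mul, integral_pow, zero_pow (by omega), sub_zero,
    show i + 1 + (c : ℕ) = i + c + 1 by omega, Nat.factorial_succ]
  push_cast
  field_simp

theorem derivChain_gammaVec (τ : ℝ) (M L : ℕ) :
    DerivChain τ L (fun j t => gammaVec M (L - j) t) := fun j hj =>
  ⟨(continuous_gammaVec M _).intervalIntegrable _ _, fun t _ => by
    dsimp only
    rw [gammaVec_apply_zero M (by omega), zero_add, integral_gammaVec,
      show L - (j + 1) + 1 = L - j by omega]⟩

theorem iteratedPrimitive_gammaVec_zero (L K : ℕ) {t : ℝ} (ht : 0 ≤ t) :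
    iteratedPrimitive (gammaVec L 0) K t = gammaVec L (K + 1) t := by
  induction K generalizing t with
  | zero => rw [iteratedPrimitive_zero, integral_gammaVec]
  | succ K ih =>
    rw [iteratedPrimitive_succ ht (continuous_gammaVec L 0).integrableOn_Ioc, ← integral_gammaVec]
    refine intervalIntegral.integral_congr fun s hs => ih ?_
    rw [uIcc_of_le ht] at hs
    exact hs.1

noncomputable def dotProductCLM {ι : Type*} [Fintype ι] (v : ι → ℝ) : (ι → ℝ) →L[ℝ] ℝ :=
  LinearMap.toContinuousLinearMap ((dotProductBilin ℝ ℝ).flip v)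

@[simp]
theorem dotProductCLM_apply {ι : Type*} [Fintype ι] (v x : ι → ℝ) : dotProductCLM v x = x ⬝ᵥ v :=
  rfl

theorem GammaMat_mulVec_apply {L : ℕ} {τ : ℝ} (hτ : 0 ≤ τ) (v : Fin L → ℝ) (i : Fin L) :
    (GammaMat L τ *ᵥ v) i
      = ((i : ℕ)! : ℝ)⁻¹ * ∫ s in (0 : ℝ)..τ, (τ - s) ^ (i : ℕ) * (gammaVec L 0 s ⬝ᵥ v) := by
  change gammaVec L (i + 1) τ ⬝ᵥ v = _
  rw [← iteratedPrimitive_gammaVec_zero L i hτ, iteratedPrimitive, ← dotProductCLM_apply,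
    ← ContinuousLinearMap.intervalIntegral_comp_comm _
      (Continuous.intervalIntegrable (by fun_prop) _ _),
    ← intervalIntegral.integral_const_mul]
  congr 1
  ext s
  simp only [dotProductCLM_apply, smul_dotProduct, smul_eq_mul]
  ring

theorem Polynomial.eq_zero_of_integral_sq_eq_zero {p : ℝ[X]} {τ : ℝ} (hτ : 0 < τ)
    (h : ∫ s in (0 : ℝ)..τ, p.eval s ^ 2 = 0) : p = 0 := by
  have hae := (intervalIntegral.integral_eq_zero_iff_of_le_of_nonneg_ae hτ.le
    (ae_of_all _ fun s => sq_nonneg (p.eval s)) ((p.continuous.pow 2).intervalIntegrable _ _)).1 h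
  have hIoo : EqOn (fun s => p.eval s ^ 2) 0 (Ioo 0 τ) :=
    Measure.eqOn_open_of_ae_eq (ae_restrict_of_ae_restrict_of_subset Ioo_subset_Ioc_self hae)
      isOpen_Ioo (p.continuous.pow 2).continuousOn continuousOn_const
  exact p.eq_zero_of_infinite_isRoot
    ((Ioo_infinite hτ).mono fun s hs => (pow_eq_zero_iff two_ne_zero).1 (hIoo hs))

theorem Polynomial.eq_zero_of_integral_sub_pow_mul_eq_zero {p : ℝ[X]} {L : ℕ}
    (hp : p.degree < L) {τ : ℝ} (hτ : 0 < τ)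
    (h : ∀ k < L, ∫ s in (0 : ℝ)..τ, (τ - s) ^ k * p.eval s = 0) : p = 0 := by
  by_contra hp0
  set q := p.comp (C τ - X)
  have hq : q.natDegree < L := by
    refine natDegree_comp_le.trans_lt ?_
    have : (C τ - X).natDegree ≤ 1 := by compute_degree
    have := (natDegree_lt_iff_degree_lt hp0).2 hp
    nlinarith
  have hexp : ∀ s, p.eval s ^ 2 = ∑ k ∈ Finset.range L, q.coeff k * ((τ - s) ^ k * p.eval s) := by
    intro s
    have : p.eval s = q.eval (τ - s) := by simp [q]
    rw [sq]
    nth_rewrite 1 [this]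
    rw [eval_eq_sum_range' hq, Finset.sum_mul]
    exact Finset.sum_congr rfl fun k _ => by ring
  refine hp0 (eq_zero_of_integral_sq_eq_zero hτ ?_)
  simp_rw [hexp]
  rw [intervalIntegral.integral_finsetSum fun k _ =>
    Continuous.intervalIntegrable (by fun_prop) _ _]
  refine Finset.sum_eq_zero fun k hk => ?_
  rw [intervalIntegral.integral_const_mul, h k (Finset.mem_range.1 hk), mul_zero]

theorem det_GammaMat_ne_zero (L : ℕ) {τ : ℝ} (hτ : 0 < τ) : (GammaMat L τ).det ≠ 0 := by
  intro hdet
  obtain ⟨v, hv0, hv⟩ := Matrix.exists_mulVec_eq_zero_iff.2 hdet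
  set p : ℝ[X] := ∑ c : Fin L, C (v c) * X ^ (c : ℕ)
  have hp_eval : ∀ s, p.eval s = gammaVec L 0 s ⬝ᵥ v := by
    intro s
    simp only [p, eval_finsetSum, eval_mul, eval_C, eval_pow, eval_X, gammaVec, dotProduct,
      zero_add]
    refine Finset.sum_congr rfl fun c _ => ?_
    field_simp
  have hp : p = 0 := eq_zero_of_integral_sub_pow_mul_eq_zero (degree_sum_fin_lt v) hτ fun k hk => by
    have := congrFun hv ⟨k, hk⟩
    rw [GammaMat_mulVec_apply hτ.le, Pi.zero_apply, mul_eq_zero] at this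
    simp_rw [hp_eval]
    exact this.resolve_left (by positivity)
  exact hv0 (funext fun c => by
    simpa [p, finsetSum_coeff, coeff_C_mul_X_pow, Fin.val_inj] using congrArg (coeff · c) hp)

theorem GammaMat_mulVec_LambdaMat {L n : ℕ} {τ : ℝ} (hτ : 0 < τ) (f : ℝ → Fin n → ℝ) (ℓ : ℕ)
    (b : Fin n → ℝ) :
    GammaMat L τ *ᵥ (LambdaMat τ L f ℓ *ᵥ b)
      = fun i : Fin L => fTilde L f ((ℓ : ℤ) - ((i : ℕ) + 1)) τ ⬝ᵥ b := by
  unfold LambdaMat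
  rw [mulVec_mulVec, ← Matrix.mul_assoc,
    mul_nonsing_inv _ (det_GammaMat_ne_zero L hτ).isUnit, Matrix.one_mul]
  rfl

theorem gammaVec_dotProduct_LambdaMat {L n : ℕ} {τ : ℝ} (hτ : 0 < τ) (f : ℝ → Fin n → ℝ)
    (ℓ : ℕ) (b : Fin n → ℝ) {j : ℕ} (hj : j < L) :
    gammaVec L (L - j) τ ⬝ᵥ (LambdaMat τ L f ℓ *ᵥ b) = fTilde L f ((j : ℤ) + ℓ - L) τ ⬝ᵥ b := by
  have h := congrFun (GammaMat_mulVec_LambdaMat (L := L) hτ f ℓ b) ⟨L - 1 - j, by omega⟩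
  rw [show (ℓ : ℤ) - (((L - 1 - j : ℕ) : ℤ) + 1) = (j : ℤ) + ℓ - L by omega] at h
  rw [← h, show L - j = L - 1 - j + 1 by omega]
  rfl

end Gamma

theorem stmt_3_general (τ : ℝ) (hτ : 0 < τ) (L : ℕ) (n : ℕ)
    (ℓ : ℕ) (hℓ : ℓ ≤ L) (f : ℝ → Fin n → ℝ) (hf : MemL2 τ f) (b : Fin n → ℝ) :
    IsH0 τ L (fun j t =>
      fTilde L f ((j : ℤ) + (ℓ : ℤ) - (L : ℤ)) t ⬝ᵥ b -
        gammaVec L (L - j) t ⬝ᵥ (LambdaMat τ L f ℓ).mulVec b) := by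
  refine ⟨((derivChain_fTilde hτ.le hf hℓ).map (dotProductCLM b)).sub
    ((derivChain_gammaVec τ L L).map (dotProductCLM (LambdaMat τ L f ℓ *ᵥ b))), ?_,
    fun j hj => ⟨?_, ?_⟩⟩
  · exact ((dotProductCLM b).comp_memLp' (memL2_fTilde hτ.le hf (by omega))).sub
      (((continuous_gammaVec L _).dotProduct continuous_const).continuousOn.memLp_restrict_Ioc 2)
  · dsimp only
    rw [fTilde_apply_zero f (show (j : ℤ) + ℓ - L < L by omega),
      gammaVec_apply_zero L (show L - j ≠ 0 by omega), zero_dotProduct, zero_dotProduct, sub_zero]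
  · exact sub_eq_zero.2 (gammaVec_dotProduct_LambdaMat hτ f ℓ b hj).symm

/-- **Proposition 3.3, computational core.** The family
`Ψ j t := f̃_{j+ℓ-L}(t)ᵀ b - γ_{L-j}(t)ᵀ Λ_ℓ b` (for `j = 0,…,L`) is the derivative chain
of `ψ_b = Ψ 0`; in particular it satisfies the stated derivative formulae on `[0,τ]`
(claim (a)), vanishes together with its first `L-1` derivatives at `0` and `τ`
(claim (b)), and `ψ_b ∈ H^L_0[0,τ]` with a.e. `L`-th derivative
`f̃_ℓ(t)ᵀ b - γ_0(t)ᵀ Λ_ℓ b` (claim (c)). -/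
theorem stmt_3 (τ : ℝ) (hτ : 0 < τ) (L : ℕ) (hL : 1 ≤ L) (n : ℕ) (hn : 1 ≤ n)
    (ℓ : ℕ) (hℓ : ℓ ≤ L) (f : ℝ → Fin n → ℝ) (hf : MemL2 τ f) (b : Fin n → ℝ) :
    IsH0 τ L (fun j t =>
      fTilde L f ((j : ℤ) + (ℓ : ℤ) - (L : ℤ)) t ⬝ᵥ b -
        gammaVec L (L - j) t ⬝ᵥ (LambdaMat τ L f ℓ).mulVec b) :=
  stmt_3_general τ hτ L n ℓ hℓ f hf b
end

section
/- Let p ≥ 1 and n ≥ p. Let Π ∈ ℝ^{(p+n)×(p+n)} be symmetric, partitioned as Π = [[Π₁₁, Π₁₂],[Π₁₂^⊤, Π₂₂]] with Π₁₁ ∈ ℝ^{p×p}, Π₁₂ ∈ ℝ^{p×n}, Π₂₂ ∈ ℝ^{n×n}. Assume Π₂₂ is negative definite and that there exists R_s ∈ ℝ^{p×n} such that [I_p; R_s^⊤]^⊤ Π [I_p; R_s^⊤] is positive semidefinite. Define J_p := [0_{p×(n−p)} I_p] ∈ ℝ^{p×n}, let T ∈ ℝ^{(p+n)×2n} be the block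 matrix [[J_p, 0_{p×n}],[0_{n×n}, I_n]], and set N := T^⊤ Π T ∈ ℝ^{2n×2n}, partitioned as N = [[N₁₁, N₁₂],[N₁₂^⊤, N₂₂]] with all blocks n×n. Then: N₂₂ is negative definite, ker N₂₂ ⊆ ker N₁₂, and N₁₁ − N₁₂ N₂₂^{−1} N₁₂^⊤ is positive semidefinite. -/
open Matrix

/-- The `(p+n) × p` matrix `[I_p; Rᵀ]` obtained by stacking `I_p` on top of `Rᵀ`. -/
def stackIRt {p n : ℕ} (R : Matrix (Fin p) (Fin n) ℝ) :
    Matrix (Fin p ⊕ Fin n) (Fin p) ℝ :=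
  Matrix.of (Sum.elim (fun a j => if a = j then (1 : ℝ) else 0) (fun b j => R j b))

/-- `J_p = [0_{p×(n-p)} I_p] ∈ ℝ^{p×n}`. -/
def JpMat (p n : ℕ) : Matrix (Fin p) (Fin n) ℝ :=
  Matrix.of fun i j => if (j : ℕ) = n - p + (i : ℕ) then 1 else 0

/-! If `-Π₂₂ ≻ 0`, completing the square in the lower block gives, for every `R`,
`Π₁₁ - Π₁₂ Π₂₂⁻¹ Π₁₂ᵀ = [I; Rᵀ]ᵀ Π [I; Rᵀ] + (R + Π₁₂ Π₂₂⁻¹) (-Π₂₂) (R + Π₁₂ Π₂₂⁻¹)ᵀ`,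
so the Schur complement of `Π` dominates every such quadratic form and is positive semidefinite
as soon as one of them is. Conjugating `Π` by `T` replaces the Schur complement by its congruence
under `J_p`, which preserves semidefiniteness, and leaves the lower-right block `Π₂₂` unchanged. -/

namespace Matrix

variable {m n K : Type*} [Fintype m] [Fintype n]

lemma fromRows_one_conjTranspose_mul_fromBlocks_mul [Ring K] [StarRing K] [DecidableEq m]
    (A : Matrix m m K) (B : Matrix m n K) (C : Matrix n m K) (D : Matrix n n K)
    (R : Matrix m n K) :
    (fromRows (1 : Matrix m m K) Rᴴ)ᴴ * fromBlocks A B C D * fromRows (1 : Matrix m m K) Rᴴ =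
      A + B * Rᴴ + R * C + R * D * Rᴴ := by
  rw [conjTranspose_fromRows_eq_fromCols_conjTranspose, fromCols_mul_fromBlocks,
    fromCols_mul_fromRows]
  simp only [conjTranspose_one, conjTranspose_conjTranspose, Matrix.one_mul, Matrix.mul_one,
    Matrix.add_mul]
  abel

omit [Fintype n] in
lemma fromBlocks_transpose_mul_fromBlocks_mul_fromBlocks {l : Type*} [Fintype l] [Semiring K]
    [DecidableEq l] (J : Matrix m n K) (A : Matrix m m K) (B : Matrix m l K) (C : Matrix l m K)
    (D : Matrix l l K) :
    (fromBlocks J 0 0 (1 : Matrix l l K))ᵀ * fromBlocks A B C D *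
      fromBlocks J 0 0 (1 : Matrix l l K) = fromBlocks (Jᵀ * A * J) (Jᵀ * B) (C * J) D := by
  simp [fromBlocks_transpose, fromBlocks_multiply, Matrix.mul_assoc]

section Field

variable [Field K] [StarRing K] [DecidableEq n]

omit [Fintype m] in
lemma schur_complement_eq_add_mul_neg_mul (A : Matrix m m K) (B : Matrix m n K)
    {D : Matrix n n K} (hD : D.IsHermitian) (hD' : IsUnit D.det) (R : Matrix m n K) :
    A - B * D⁻¹ * Bᴴ =
      (A + B * Rᴴ + R * Bᴴ + R * D * Rᴴ) + (R + B * D⁻¹) * -D * (R + B * D⁻¹)ᴴ := by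
  have hinv : D⁻¹ᴴ = D⁻¹ := by rw [conjTranspose_nonsing_inv, hD.eq]
  simp only [conjTranspose_add, conjTranspose_mul, hinv, Matrix.add_mul, Matrix.mul_add,
    Matrix.mul_neg, Matrix.neg_mul, Matrix.mul_assoc, nonsing_inv_mul_cancel_left _ _ hD',
    mul_nonsing_inv_cancel_left _ _ hD']
  abel

lemma posSemidef_schur_complement_of_neg_posDef [PartialOrder K] [AddLeftMono K]
    [DecidableEq m] {A : Matrix m m K} {B : Matrix m n K} {D : Matrix n n K} (hD : (-D).PosDef)
    (R : Matrix m n K)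
    (hR : ((fromRows (1 : Matrix m m K) Rᴴ)ᴴ * fromBlocks A B Bᴴ D *
      fromRows (1 : Matrix m m K) Rᴴ).PosSemidef) :
    (A - B * D⁻¹ * Bᴴ).PosSemidef := by
  have hD_herm : D.IsHermitian := by simpa using hD.isHermitian.neg
  have hD_det : IsUnit D.det := (isUnit_iff_isUnit_det D).mp ((IsUnit.neg_iff D).mp hD.isUnit)
  rw [schur_complement_eq_add_mul_neg_mul A B hD_herm hD_det R]
  rw [fromRows_one_conjTranspose_mul_fromBlocks_mul] at hR
  exact hR.add (hD.posSemidef.mul_mul_conjTranspose_same _)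

end Field

end Matrix

lemma stackIRt_eq_fromRows {p q : ℕ} (R : Matrix (Fin p) (Fin q) ℝ) :
    stackIRt R = fromRows 1 Rᵀ := by
  ext (a | b) j <;> simp [stackIRt, one_apply]

theorem stmt_8_general (p n : ℕ)
    (P11 : Matrix (Fin p) (Fin p) ℝ) (P12 : Matrix (Fin p) (Fin n) ℝ)
    (P22 : Matrix (Fin n) (Fin n) ℝ)
    (hP22neg : (-P22).PosDef)
    (Rs : Matrix (Fin p) (Fin n) ℝ)
    (hRs : ((stackIRt Rs)ᵀ * Matrix.fromBlocks P11 P12 P12ᵀ P22 *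
        stackIRt Rs).PosSemidef)
    (T : Matrix (Fin p ⊕ Fin n) (Fin n ⊕ Fin n) ℝ)
    (hT : T = Matrix.fromBlocks (JpMat p n) 0 0 (1 : Matrix (Fin n) (Fin n) ℝ))
    (N : Matrix (Fin n ⊕ Fin n) (Fin n ⊕ Fin n) ℝ)
    (hN : N = Tᵀ * Matrix.fromBlocks P11 P12 P12ᵀ P22 * T) :
    (-N.toBlocks₂₂).PosDef ∧
      (∀ x : Fin n → ℝ, N.toBlocks₂₂.mulVec x = 0 → N.toBlocks₁₂.mulVec x = 0) ∧
      (N.toBlocks₁₁ - N.toBlocks₁₂ * N.toBlocks₂₂⁻¹ * N.toBlocks₁₂ᵀ).PosSemidef := by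
  set J := JpMat p n
  rw [hN, hT, fromBlocks_transpose_mul_fromBlocks_mul_fromBlocks, toBlocks_fromBlocks₁₁,
    toBlocks_fromBlocks₁₂, toBlocks_fromBlocks₂₂]
  have hSchur : (P11 - P12 * P22⁻¹ * P12ᵀ).PosSemidef := by
    rw [stackIRt_eq_fromRows] at hRs
    simp only [← conjTranspose_eq_transpose_of_trivial] at hRs ⊢
    exact posSemidef_schur_complement_of_neg_posDef hP22neg Rs hRs
  have hP22_unit : IsUnit P22 := (IsUnit.neg_iff P22).mp hP22neg.isUnit
  refine ⟨hP22neg, fun x hx => ?_, ?_⟩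
  · rw [mulVec_injective_of_isUnit hP22_unit (hx.trans (mulVec_zero P22).symm), mulVec_zero]
  · have hcongr : Jᵀ * P11 * J - Jᵀ * P12 * P22⁻¹ * (Jᵀ * P12)ᵀ =
        Jᵀ * (P11 - P12 * P22⁻¹ * P12ᵀ) * J := by
      simp only [transpose_mul, transpose_transpose, Matrix.mul_sub, Matrix.sub_mul,
        Matrix.mul_assoc]
    rw [hcongr, ← conjTranspose_eq_transpose_of_trivial]
    exact hSchur.conjTranspose_mul_mul_same J

/-- **Lemma 4.6 (matrix-level content).** If `Π = [[Π₁₁,Π₁₂],[Π₁₂ᵀ,Π₂₂]]` is symmetric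
with `Π₂₂ ≺ 0` and `[I_p; R_sᵀ]ᵀ Π [I_p; R_sᵀ] ⪰ 0` for some `R_s`, then
`N := Tᵀ Π T` (with `T = [[J_p, 0],[0, I_n]]`) satisfies `N₂₂ ≺ 0`,
`ker N₂₂ ⊆ ker N₁₂`, and `N₁₁ - N₁₂ N₂₂⁻¹ N₁₂ᵀ ⪰ 0`. -/
theorem stmt_8 (p n : ℕ) (hp : 1 ≤ p) (hpn : p ≤ n)
    (P11 : Matrix (Fin p) (Fin p) ℝ) (P12 : Matrix (Fin p) (Fin n) ℝ)
    (P22 : Matrix (Fin n) (Fin n) ℝ)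
    (hP11 : P11.IsSymm) (hP22 : P22.IsSymm)
    (hP22neg : (-P22).PosDef)
    (Rs : Matrix (Fin p) (Fin n) ℝ)
    (hRs : ((stackIRt Rs)ᵀ * Matrix.fromBlocks P11 P12 P12ᵀ P22 *
        stackIRt Rs).PosSemidef)
    (T : Matrix (Fin p ⊕ Fin n) (Fin n ⊕ Fin n) ℝ)
    (hT : T = Matrix.fromBlocks (JpMat p n) 0 0 (1 : Matrix (Fin n) (Fin n) ℝ))
    (N : Matrix (Fin n ⊕ Fin n) (Fin n ⊕ Fin n) ℝ)
    (hN : N = Tᵀ * Matrix.fromBlocks P11 P12 P12ᵀ P22 * T) :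
    (-N.toBlocks₂₂).PosDef ∧
      (∀ x : Fin n → ℝ, N.toBlocks₂₂.mulVec x = 0 → N.toBlocks₁₂.mulVec x = 0) ∧
      (N.toBlocks₁₁ - N.toBlocks₁₂ * N.toBlocks₂₂⁻¹ * N.toBlocks₁₂ᵀ).PosSemidef :=
  stmt_8_general p n P11 P12 P22 hP22neg Rs hRs T hT N hN
end

section
/- Let q, L ∈ ℕ with q, L ≥ 1, let G_0, …, G_{L−1} ∈ ℝ^{q×q}, and set G̃ := [G_0 G_1 ⋯ G_{L−1}] ∈ ℝ^{q×qL}. Define the behavior B := { w ∈ C^∞(ℝ;ℝ^q) : w^{(L)}(t) + Σ_{ℓ=0}^{L−1} G_ℓ w^{(ℓ)}(t) = 0 for all t ∈ ℝ }. Let Ψ̃ ∈ ℝ^{qL×qL} be symmetric, and for w ∈ B define X_w(t) ∈ ℝ^{qL} as the stacked vector (w(t), w'(t), …, w^{(L−1)}(t)) and Q_w(t) := X_w(t)^⊤ Ψ̃ X_w(t). Suppose that for every w ∈ B and every t ∈ ℝ, (d/dt)Q_w(t) = −Σ_{i=0}^{L−1} ‖w^{(i)}(t)‖². Then the matrix [−J_{q(L−1)};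 G̃]^⊤ Ψ̃ + Ψ̃ [−J_{q(L−1)}; G̃] is positive definite (indeed it equals I_{qL}), where [−J_{q(L−1)}; G̃] ∈ ℝ^{qL×qL} is obtained by stacking the rows of −J_{q(L−1)} := −[0_{q(L−1)×q} I_{q(L−1)}] on top of the rows of G̃. -/
open Matrix

/-- The stacked vector `X_w(t) = (w(t), w'(t), …, w^{(L-1)}(t)) ∈ ℝ^{qL}`, indexed by
`Fin L × Fin q`. -/
noncomputable def Xvec (q L : ℕ) (w : ℝ → Fin q → ℝ) (t : ℝ) : Fin L × Fin q → ℝ :=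
  fun r => iteratedDeriv (r.1 : ℕ) w t r.2

/-- `[-J_{q(L-1)}; G̃] ∈ ℝ^{qL×qL}`, where `G̃ = [G_0 G_1 ⋯ G_{L-1}]` and
`J_{q(L-1)} = [0 I_{q(L-1)}]`. -/
def AmatG (q L : ℕ) (G : Fin L → Matrix (Fin q) (Fin q) ℝ) :
    Matrix (Fin L × Fin q) (Fin L × Fin q) ℝ :=
  Matrix.of fun r c =>
    if (r.1 : ℕ) + 1 < L then
      (if (c.1 : ℕ) = (r.1 : ℕ) + 1 ∧ c.2 = r.2 then -1 else 0)
    else G c.1 r.2 c.2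

attribute [local instance] Matrix.linftyOpNormedRing Matrix.linftyOpNormedAlgebra

/-- Polarization: a symmetric real matrix whose quadratic form is the standard one
is the identity. -/
lemma symm_quadform_eq_one {n : Type*} [Fintype n] [DecidableEq n]
    (S : Matrix n n ℝ) (hS : Sᵀ = S)
    (h : ∀ v : n → ℝ, v ⬝ᵥ S.mulVec v = v ⬝ᵥ v) : S = 1 := by
  have hbil : ∀ u w : n → ℝ, u ⬝ᵥ S.mulVec w = u ⬝ᵥ w := by
    intro u w
    have hsym : w ⬝ᵥ S.mulVec u = u ⬝ᵥ S.mulVec w := by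
      rw [Matrix.dotProduct_mulVec, ← Matrix.mulVec_transpose, hS]
      exact dotProduct_comm _ _
    have h1 := h (u + w)
    have h2 := h u
    have h3 := h w
    have hc : w ⬝ᵥ u = u ⬝ᵥ w := dotProduct_comm _ _
    simp only [Matrix.mulVec_add, dotProduct_add, add_dotProduct] at h1
    linarith
  ext i j
  have := hbil (Pi.single i 1) (Pi.single j 1)
  simp only [Matrix.mulVec_single_one, Matrix.col_apply, single_dotProduct, one_mul, mul_one,
    Pi.single_apply] at this
  simp [Matrix.one_apply, this]

/-- **Lemma A.2 b).** -/
theorem stmt_12 (q L : ℕ) (hq : 1 ≤ q) (hL : 1 ≤ L)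
    (G : Fin L → Matrix (Fin q) (Fin q) ℝ)
    (Ψ : Matrix (Fin L × Fin q) (Fin L × Fin q) ℝ) (hΨ : Ψ.IsSymm)
    (hQ : ∀ w : ℝ → Fin q → ℝ, ContDiff ℝ (⊤ : ℕ∞) w →
      (∀ t : ℝ, iteratedDeriv L w t +
          ∑ ℓ : Fin L, (G ℓ).mulVec (iteratedDeriv (ℓ : ℕ) w t) = 0) →
      ∀ t : ℝ, deriv (fun s => Xvec q L w s ⬝ᵥ Ψ.mulVec (Xvec q L w s)) t =
        -∑ i : Fin L, ∑ j : Fin q, (iteratedDeriv (i : ℕ) w t j) ^ 2) :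
    ((AmatG q L G)ᵀ * Ψ + Ψ * AmatG q L G).PosDef ∧
      (AmatG q L G)ᵀ * Ψ + Ψ * AmatG q L G = 1 := by
  classical
  set A := AmatG q L G with hAdef
  have hL0 : 0 < L := hL
  have key : ∀ v : Fin L × Fin q → ℝ,
      v ⬝ᵥ (Aᵀ * Ψ + Ψ * A).mulVec v = v ⬝ᵥ v := by
    intro v
    set M : Matrix (Fin L × Fin q) (Fin L × Fin q) ℝ := -A with hMdef
    set x : ℝ → (Fin L × Fin q → ℝ) :=
      fun t => (NormedSpace.exp (t • M)).mulVec v with hxdef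
    let Φ : Matrix (Fin L × Fin q) (Fin L × Fin q) ℝ →L[ℝ] (Fin L × Fin q → ℝ) :=
      LinearMap.toContinuousLinearMap
        { toFun := fun B => B.mulVec v
          map_add' := fun B C => Matrix.add_mulVec B C v
          map_smul' := fun c B => Matrix.smul_mulVec c B v }
    -- derivative of x
    have hΦd : ∀ t, HasDerivAt x (M.mulVec (x t)) t := by
      intro t
      have hE : HasDerivAt (fun u : ℝ => NormedSpace.exp (u • M))
          (M * NormedSpace.exp (t • M)) t := hasDerivAt_exp_smul_const' M t
      have h2 := Φ.hasFDerivAt.comp_hasDerivAt t hE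
      have h3 : Φ (M * NormedSpace.exp (t • M)) = M.mulVec (x t) := by
        show (M * NormedSpace.exp (t • M)).mulVec v = _
        rw [← Matrix.mulVec_mulVec]
      rw [← h3]
      exact h2
    -- smoothness of x
    have hxsm : ContDiff ℝ (⊤ : ℕ∞) x := by
      have h1 : ContDiff ℝ (⊤ : ℕ∞) (fun t : ℝ => t • M) := contDiff_id.smul contDiff_const
      have h2 : ContDiff ℝ (⊤ : ℕ∞) (NormedSpace.exp :
          Matrix (Fin L × Fin q) (Fin L × Fin q) ℝ → _) :=
        contDiff_iff_contDiffAt.2 fun y => (NormedSpace.exp_analytic (𝕂 := ℝ) y).contDiffAt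
      exact Φ.contDiff.comp (h2.comp h1)
    set w : ℝ → Fin q → ℝ := fun t j => x t (⟨0, hL0⟩, j) with hwdef
    have hwsm : ContDiff ℝ (⊤ : ℕ∞) w :=
      contDiff_pi.2 fun j => contDiff_pi.1 hxsm (⟨0, hL0⟩, j)
    -- entries of `M.mulVec`
    have hMmul : ∀ (u : Fin L × Fin q → ℝ) (k : Fin L) (j : Fin q),
        M.mulVec u (k, j) =
          if hk : (k : ℕ) + 1 < L then u (⟨(k : ℕ) + 1, hk⟩, j)
          else -∑ c : Fin L × Fin q, G c.1 j c.2 * u c := by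
      intro u k j
      by_cases hk : (k : ℕ) + 1 < L
      · rw [dif_pos hk]
        have hcond : ∀ c : Fin L × Fin q,
            (((c.1 : ℕ) = (k : ℕ) + 1 ∧ c.2 = j) ↔
              c = ((⟨(k : ℕ) + 1, hk⟩ : Fin L), j)) := by
          rintro ⟨c1, c2⟩
          simp [Prod.ext_iff, Fin.ext_iff]
        show ∑ c : Fin L × Fin q, M (k, j) c * u c = _
        rw [Finset.sum_eq_single (((⟨(k : ℕ) + 1, hk⟩ : Fin L), j) : Fin L × Fin q)]
        · simp [hMdef, hAdef, AmatG, hk]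
        · intro c _ hc
          have hnc : ¬((c.1 : ℕ) = (k : ℕ) + 1 ∧ c.2 = j) := fun h => hc ((hcond c).1 h)
          simp [hMdef, hAdef, AmatG, hk, hnc]
        · simp
      · rw [dif_neg hk]
        show ∑ c : Fin L × Fin q, M (k, j) c * u c = _
        rw [← Finset.sum_neg_distrib]
        refine Finset.sum_congr rfl fun c _ => ?_
        simp [hMdef, hAdef, AmatG, hk]
    -- iterated derivatives of w
    have hXk : ∀ (k : ℕ) (hk : k < L),
        iteratedDeriv k w = fun t j => x t (⟨k, hk⟩, j) := by
      intro k
      induction k with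
      | zero => intro hk; rw [iteratedDeriv_zero]
      | succ k ih =>
        intro hk
        have hkL : k < L := Nat.lt_of_succ_lt hk
        rw [iteratedDeriv_succ, ih hkL]
        funext t
        have hd : HasDerivAt (fun s => fun j => x s (⟨k, hkL⟩, j))
            (fun j => x t (⟨k + 1, hk⟩, j)) t := by
          refine hasDerivAt_pi.2 fun j => ?_
          have h0 := hasDerivAt_pi.1 (hΦd t) (⟨k, hkL⟩, j)
          have h1 : M.mulVec (x t) (⟨k, hkL⟩, j) = x t (⟨k + 1, hk⟩, j) := by
            rw [hMmul (x t) ⟨k, hkL⟩ j, dif_pos hk]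
          rwa [h1] at h0
        exact hd.deriv
    -- the trajectory satisfies the ODE
    have hODE : ∀ t : ℝ, iteratedDeriv L w t +
        ∑ ℓ : Fin L, (G ℓ).mulVec (iteratedDeriv (ℓ : ℕ) w t) = 0 := by
      intro t
      have hL1 : L - 1 < L := Nat.sub_lt hL0 one_pos
      have hlast : iteratedDeriv L w t = fun j => M.mulVec (x t) (⟨L - 1, hL1⟩, j) := by
        have hLe : L = (L - 1) + 1 := (Nat.succ_pred_eq_of_pos hL0).symm
        have hd : HasDerivAt (fun s => fun j => x s (⟨L - 1, hL1⟩, j))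
            (fun j => M.mulVec (x t) (⟨L - 1, hL1⟩, j)) t :=
          hasDerivAt_pi.2 fun j => hasDerivAt_pi.1 (hΦd t) (⟨L - 1, hL1⟩, j)
        conv_lhs => rw [hLe, iteratedDeriv_succ, hXk (L - 1) hL1]
        exact hd.deriv
      funext j
      have h1 : M.mulVec (x t) (⟨L - 1, hL1⟩, j) =
          -∑ c : Fin L × Fin q, G c.1 j c.2 * x t c := by
        rw [hMmul (x t) ⟨L - 1, hL1⟩ j, dif_neg (by omega : ¬(L - 1 + 1 < L))]
      have h2 : ∀ ℓ : Fin L, (G ℓ).mulVec (iteratedDeriv (ℓ : ℕ) w t) j =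
          ∑ j' : Fin q, G ℓ j j' * x t (ℓ, j') := by
        intro ℓ
        rw [hXk (ℓ : ℕ) ℓ.isLt]
        simp [Matrix.mulVec, dotProduct]
      simp only [Pi.add_apply, Pi.zero_apply, hlast, h1, Finset.sum_apply, h2]
      rw [Fintype.sum_prod_type]
      ring
    -- Xvec agrees with x
    have hXv : ∀ s, Xvec q L w s = x s := by
      intro s; funext r
      show iteratedDeriv (r.1 : ℕ) w s r.2 = x s r
      rw [hXk (r.1 : ℕ) r.1.isLt]
    -- initial condition
    have hx0 : x 0 = v := by
      rw [hxdef]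
      simp [NormedSpace.exp_zero, Matrix.one_mulVec]
    -- the main derivative identity
    have hQr := hQ w hwsm hODE 0
    have hfun : (fun s => Xvec q L w s ⬝ᵥ Ψ.mulVec (Xvec q L w s)) =
        fun s => ∑ r, ∑ c, x s r * (Ψ r c * x s c) := by
      funext s
      rw [hXv]
      simp [dotProduct, Matrix.mulVec, Finset.mul_sum]
    rw [hfun] at hQr
    have hcomp : ∀ r, HasDerivAt (fun s => x s r) (M.mulVec v r) 0 := by
      intro r
      have := hasDerivAt_pi.1 (hΦd 0) r
      rwa [hx0] at this
    have hder0 : HasDerivAt (fun s => ∑ r, ∑ c, x s r * (Ψ r c * x s c))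
        (∑ r, ∑ c, (M.mulVec v r * (Ψ r c * x 0 c) + x 0 r * (Ψ r c * M.mulVec v c)))
        0 := by
      refine HasDerivAt.fun_sum fun r _ => HasDerivAt.fun_sum fun c _ => ?_
      exact (hcomp r).mul ((hcomp c).const_mul (Ψ r c))
    rw [hx0] at hder0
    rw [hder0.deriv] at hQr
    have e1 : ∑ r, ∑ c, (M.mulVec v r * (Ψ r c * v c) + v r * (Ψ r c * M.mulVec v c))
        = (M.mulVec v) ⬝ᵥ (Ψ.mulVec v) + v ⬝ᵥ (Ψ.mulVec (M.mulVec v)) := by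
      simp [dotProduct, Matrix.mulVec, Finset.mul_sum, Finset.sum_add_distrib]
    have e2 : ∑ i : Fin L, ∑ j : Fin q, (iteratedDeriv (i : ℕ) w 0 j) ^ 2 = v ⬝ᵥ v := by
      have hterm : ∀ (i : Fin L) (j : Fin q), iteratedDeriv (i : ℕ) w 0 j = v (i, j) := by
        intro i j
        rw [hXk (i : ℕ) i.isLt]
        simp [hx0]
      simp only [hterm]
      rw [show (v ⬝ᵥ v) = ∑ p : Fin L × Fin q, v p * v p from rfl,
        Fintype.sum_prod_type]
      simp [sq]
    rw [e1, e2] at hQr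
    have hMv : M.mulVec v = -(A.mulVec v) := by
      rw [hMdef]; exact Matrix.neg_mulVec _ _
    rw [hMv] at hQr
    simp only [neg_dotProduct, Matrix.mulVec_neg, dotProduct_neg] at hQr
    have hgoal : v ⬝ᵥ (Aᵀ * Ψ + Ψ * A).mulVec v =
        (A.mulVec v) ⬝ᵥ (Ψ.mulVec v) + v ⬝ᵥ (Ψ.mulVec (A.mulVec v)) := by
      rw [Matrix.add_mulVec, dotProduct_add, ← Matrix.mulVec_mulVec,
        ← Matrix.mulVec_mulVec, Matrix.dotProduct_mulVec v Aᵀ, Matrix.vecMul_transpose]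
    rw [hgoal]
    linarith
  have hSsym : (Aᵀ * Ψ + Ψ * A)ᵀ = Aᵀ * Ψ + Ψ * A := by
    have hΨ' : Ψᵀ = Ψ := hΨ
    rw [Matrix.transpose_add, Matrix.transpose_mul, Matrix.transpose_mul,
      Matrix.transpose_transpose, hΨ']
    rw [add_comm]
  have hone : Aᵀ * Ψ + Ψ * A = 1 := symm_quadform_eq_one _ hSsym key
  exact ⟨hone ▸ Matrix.PosDef.one, hone⟩
end

section
/- Let τ > 0 and L ∈ ℕ with L ≥ 1. Let g ∈ L²(0,τ) satisfy ∫_0^τ t^i g(t) dt = 0 for all i = 0, 1, …, L−1. Define ψ : [0,τ] → ℝ by ψ(t) := (1/(L−1)!) ∫_0^t (t−s)^{L−1} g(s) ds. Then ψ ∈ H^L_0[0,τ] with ψ^{(L)} = g almost everywhere; that is: ψ, ψ', …, ψ^{(L−1)} are absolutely continuous on [0,τ], ψ^{(ℓ)}(0) = 0 and ψ^{(ℓ)}(τ) = 0 for all ℓ = 0, …, L−1, and the a.e. derivative of ψ^{(L−1)} equals g almost everywhere on [0,τ]. -/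
open MeasureTheory Matrix

/-!
The chain of derivatives of `ψ = J^L g` is `D ℓ = J^{L-ℓ} g`, the iterated primitives of `g`
from `0`, so the chain condition and `D ℓ 0 = 0` hold by construction. Fubini on the triangle
`0 ≤ s ≤ u ≤ t` gives Cauchy's formula `J^{k+1} g t = (1/k!) ∫₀ᵗ (t-s)^k g s ds` by induction on
`k`. At `t = τ` the kernel `(τ-s)^k` is a polynomial of degree `k < L` in `s`, so the moment
conditions make `D ℓ τ` vanish.
-/

open Set Polynomial

noncomputable def iterIntegral (a : ℝ) (g : ℝ → ℝ) : ℕ → ℝ → ℝ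
  | 0 => g
  | k + 1 => fun t => ∫ s in a..t, iterIntegral a g k s

section IterIntegral

variable {a b : ℝ} {g : ℝ → ℝ}

@[simp]
theorem iterIntegral_zero : iterIntegral a g 0 = g := rfl

theorem iterIntegral_succ_apply (k : ℕ) (t : ℝ) :
    iterIntegral a g (k + 1) t = ∫ s in a..t, iterIntegral a g k s := rfl

@[simp]
theorem iterIntegral_succ_apply_self (k : ℕ) : iterIntegral a g (k + 1) a = 0 :=
  intervalIntegral.integral_same

theorem intervalIntegrable_iterIntegral (hg : IntervalIntegrable g volume a b) :
    ∀ k, IntervalIntegrable (iterIntegral a g k) volume a b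
  | 0 => hg
  | k + 1 => (intervalIntegral.continuousOn_primitive_interval ((intervalIntegrable_iff'
      (μ := volume)).1 (intervalIntegrable_iterIntegral hg k))).intervalIntegrable

end IterIntegral

theorem integral_integral_triangle_swap {a t : ℝ} (hat : a ≤ t) {K : ℝ → ℝ → ℝ}
    (hK : Continuous (Function.uncurry K)) {g : ℝ → ℝ} (hg : IntervalIntegrable g volume a t) :
    ∫ u in a..t, (∫ s in a..u, K u s * g s) = ∫ s in a..t, (∫ u in s..t, K u s) * g s := by
  set μ := volume.restrict (Ioc a t)
  have hgμ : Integrable g μ := (intervalIntegrable_iff_integrableOn_Ioc_of_le hat).1 hg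
  -- the integrand cut off to the triangle `s ≤ u`; its two iterated integrals are the two sides
  set F : ℝ → ℝ → ℝ := fun u s => (Iic u).indicator (fun s => K u s * g s) s
  have hF : Integrable (Function.uncurry F) (μ.prod μ) := by
    obtain ⟨C, hC⟩ := (isCompact_Icc.prod isCompact_Icc).exists_bound_of_continuousOn
      (hK.continuousOn (s := Icc a t ×ˢ Icc a t))
    have hF_eq : Function.uncurry F = {p : ℝ × ℝ | p.2 ≤ p.1}.indicator
        (fun p => K p.1 p.2 * g p.2) := by
      ext ⟨u, s⟩; simp [F, indicator_apply]
    refine ((integrable_const C).mul_prod hgμ.norm).mono' ?_ ?_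
    · rw [hF_eq]
      exact ((hK.aestronglyMeasurable).mul hgμ.aestronglyMeasurable.comp_snd).indicator
        (measurableSet_le measurable_snd measurable_fst)
    · rw [Measure.prod_restrict, ae_restrict_iff' (measurableSet_Ioc.prod measurableSet_Ioc)]
      refine ae_of_all _ fun p hp => ?_
      rw [hF_eq, norm_indicator_eq_indicator_norm]
      refine (indicator_le_self' fun _ _ => by positivity) p |>.trans ?_
      rw [norm_mul]
      exact mul_le_mul_of_nonneg_right
        (hC p ⟨Ioc_subset_Icc_self hp.1, Ioc_subset_Icc_self hp.2⟩) (norm_nonneg _)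
  have inner_s : ∀ u ∈ Ioc a t, ∫ s, F u s ∂μ = ∫ s in a..u, K u s * g s := by
    intro u hu
    rw [setIntegral_indicator measurableSet_Iic, Ioc_inter_Iic, inf_eq_right.2 hu.2,
      intervalIntegral.integral_of_le hu.1.le]
  have inner_u : ∀ s ∈ Ioc a t, ∫ u, F u s ∂μ = (∫ u in s..t, K u s) * g s := by
    intro s hs
    have hF_s : (fun u => F u s) = (Ici s).indicator (fun u => K u s * g s) := by
      ext u; simp [F, indicator_apply]
    have hIcc : Ioc a t ∩ Ici s = Icc s t :=
      Set.ext fun u => ⟨fun ⟨⟨_, h⟩, h'⟩ => ⟨h', h⟩, fun ⟨h', h⟩ => ⟨⟨hs.1.trans_le h', h⟩, h'⟩⟩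
    rw [hF_s, setIntegral_indicator measurableSet_Ici, hIcc, integral_Icc_eq_integral_Ioc,
      ← intervalIntegral.integral_of_le hs.2, intervalIntegral.integral_mul_const]
  rw [intervalIntegral.integral_of_le hat, intervalIntegral.integral_of_le hat]
  calc ∫ u in Ioc a t, (∫ s in a..u, K u s * g s)
      = ∫ u, ∫ s, F u s ∂μ ∂μ := (setIntegral_congr_fun measurableSet_Ioc inner_s).symm
    _ = ∫ s, ∫ u, F u s ∂μ ∂μ := integral_integral_swap hF
    _ = ∫ s in Ioc a t, (∫ u in s..t, K u s) * g s :=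
        setIntegral_congr_fun measurableSet_Ioc inner_u

theorem integral_sub_pow {s t : ℝ} (k : ℕ) :
    ∫ u in s..t, (u - s) ^ k = (t - s) ^ (k + 1) / (k + 1) := by
  simp [intervalIntegral.integral_comp_sub_right (· ^ k), integral_pow]

theorem iterIntegral_succ_eq_integral_sub_pow_mul {a : ℝ} {g : ℝ → ℝ} (k : ℕ) {t : ℝ}
    (hat : a ≤ t) (hg : IntervalIntegrable g volume a t) :
    iterIntegral a g (k + 1) t = (1 / k.factorial : ℝ) * ∫ s in a..t, (t - s) ^ k * g s := by
  induction k generalizing t with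
  | zero => simp [iterIntegral_succ_apply]
  | succ k ih =>
    have hK : Continuous (Function.uncurry fun u s : ℝ => (u - s) ^ k) := by fun_prop
    calc iterIntegral a g (k + 2) t
        = ∫ u in a..t, (1 / k.factorial : ℝ) * ∫ s in a..u, (u - s) ^ k * g s := by
          refine intervalIntegral.integral_congr fun u hu => ?_
          exact ih (uIcc_of_le hat ▸ hu).1 (hg.mono_set (uIcc_subset_uIcc_left hu))
      _ = (1 / k.factorial : ℝ) * ∫ s in a..t, (t - s) ^ (k + 1) / (k + 1) * g s := by
          simp only [intervalIntegral.integral_const_mul, integral_integral_triangle_swap hat hK hg,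
            integral_sub_pow]
      _ = (1 / (k + 1).factorial : ℝ) * ∫ s in a..t, (t - s) ^ (k + 1) * g s := by
          simp only [div_mul_eq_mul_div, intervalIntegral.integral_div, Nat.factorial_succ]
          push_cast
          field_simp

theorem integral_eval_mul_eq_zero {a b : ℝ} {g : ℝ → ℝ} (hg : IntervalIntegrable g volume a b)
    {L : ℕ} (hmom : ∀ i < L, ∫ s in a..b, s ^ i * g s = 0) {p : ℝ[X]} (hp : p.natDegree < L) :
    ∫ s in a..b, p.eval s * g s = 0 := by
  simp only [eval_eq_sum_range, Finset.sum_mul, mul_assoc]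
  rw [intervalIntegral.integral_finsetSum fun i _ =>
    (hg.continuousOn_mul (by fun_prop)).const_mul _]
  refine Finset.sum_eq_zero fun i hi => ?_
  rw [intervalIntegral.integral_const_mul, hmom i (by grind), mul_zero]

theorem iterIntegral_succ_apply_eq_zero_of_moments {a b : ℝ} {g : ℝ → ℝ} (hab : a ≤ b)
    (hg : IntervalIntegrable g volume a b) {L : ℕ}
    (hmom : ∀ i < L, ∫ s in a..b, s ^ i * g s = 0) {k : ℕ} (hk : k < L) :
    iterIntegral a g (k + 1) b = 0 := by
  have hp : ((C b - X) ^ k).natDegree < L := by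
    refine lt_of_le_of_lt ?_ hk
    compute_degree!
  have := integral_eval_mul_eq_zero hg hmom hp
  simp only [eval_pow, eval_sub, eval_C, eval_X] at this
  rw [iterIntegral_succ_eq_integral_sub_pow_mul k hab hg, this, mul_zero]

theorem MemL2.intervalIntegrable_s15 {τ : ℝ} (hτ : 0 ≤ τ) {f : ℝ → ℝ} (hf : MemL2 τ f) :
    IntervalIntegrable f volume 0 τ :=
  (intervalIntegrable_iff_integrableOn_Ioc_of_le hτ).2 (hf.integrable one_le_two)

theorem derivChain_iterIntegral {τ : ℝ} {g : ℝ → ℝ} (hg : IntervalIntegrable g volume 0 τ)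
    (L : ℕ) : DerivChain τ L fun ℓ => iterIntegral 0 g (L - ℓ) := by
  intro ℓ hℓ
  obtain ⟨k, hk, hk'⟩ : ∃ k, L - ℓ = k + 1 ∧ L - (ℓ + 1) = k := ⟨L - (ℓ + 1), by omega, rfl⟩
  simp only [hk, hk', iterIntegral_succ_apply_self, zero_add]
  exact ⟨intervalIntegrable_iterIntegral hg k, fun t _ => iterIntegral_succ_apply k t⟩

/-- **Inclusion `(P_{L-1})^⊥ ⊆ {φ^{(L)} : φ ∈ H^L_0}` from Lemma 3.1.** If `g ∈ L²(0,τ)`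
is orthogonal to all monomials `t^i`, `i < L`, then the `L`-fold iterated integral
`ψ = J^L g` (Cauchy's formula) lies in `H^L_0[0,τ]` and `ψ^{(L)} = g` a.e.; here the
witnessing derivative chain `D` satisfies `D 0 = ψ` on `[0,τ]` and `D L = g`. -/
theorem stmt_15 (τ : ℝ) (hτ : 0 < τ) (L : ℕ) (hL : 1 ≤ L)
    (g : ℝ → ℝ) (hg : MemL2 τ g)
    (hmom : ∀ i < L, ∫ t in (0 : ℝ)..τ, t ^ i * g t = 0) :
    ∃ D : ℕ → ℝ → ℝ, IsH0 τ L D ∧ D L = g ∧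
      ∀ t ∈ Set.Icc (0 : ℝ) τ,
        D 0 t = (1 / (L - 1).factorial : ℝ) * ∫ s in (0 : ℝ)..t, (t - s) ^ (L - 1) * g s := by
  have hg' := hg.intervalIntegrable_s15 hτ.le
  have hsucc : ∀ ℓ < L, iterIntegral 0 g (L - ℓ) = iterIntegral 0 g (L - ℓ - 1 + 1) :=
    fun ℓ hℓ => by rw [Nat.sub_add_cancel (by omega)]
  refine ⟨fun ℓ => iterIntegral 0 g (L - ℓ),
    ⟨derivChain_iterIntegral hg' L, by simpa using hg, fun ℓ hℓ => ⟨?_, ?_⟩⟩, by simp, ?_⟩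
  · simp only [hsucc ℓ hℓ, iterIntegral_succ_apply_self]
  · simp only [hsucc ℓ hℓ]
    exact iterIntegral_succ_apply_eq_zero_of_moments hτ.le hg' hmom (by omega)
  · intro t ht
    simpa only [Nat.sub_zero, Nat.sub_add_cancel hL] using
      iterIntegral_succ_eq_integral_sub_pow_mul (L - 1) ht.1
        (hg'.mono_set (uIcc_subset_uIcc_left (Icc_subset_uIcc ht)))
end
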